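/- Let z ∈ ℂ and let {a_n}, {z_n} be an infinite continued fraction expansion and iteration sequence of z over the Eisenstein integers 𝔈 with respect to a nearest integer algorithm, with Q-pair {p_n}, {q_n}. Then the convergents p_n/q_n converge to z as n → ∞. -/

import Mathlib

open Complex

/-- The primitive cube root of unity ω = (−1 + √3·i)/2. -/
noncomputable def eisOmega : ℂ := (-1 + Real.sqrt 3 * Complex.I) / 2

/-- `a : ℂ` is an Eisenstein integer: `a = x + y·ω` with `x, y ∈ ℤ`. -/
def IsEis (a : ℂ) : Prop := ∃ x y : ℤ, a = (x : ℂ) + (y : ℂ) * eisOmega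

/-!
With `Wₙ = qₙ zₙ₊₁ + qₙ₋₁`, the recurrences give `z Wₙ = pₙ zₙ₊₁ + pₙ₋₁` and `Wₙ = z₁ ⋯ zₙ₊₁`,
so the determinant identity `pₙ qₙ₋₁ − pₙ₋₁ qₙ = (−1)ⁿ⁺¹` yields
`z − pₙ/qₙ = (−1)ⁿ (z₀ − a₀) ⋯ (zₙ − aₙ) / qₙ`.
Rounding lattice coordinates shows every point is within `√3/2` of an Eisenstein integer, so
each `|zₖ − aₖ| ≤ √3/2`, while `qₙ` is a nonzero Eisenstein integer, so `|qₙ| ≥ 1`.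
Hence `|z − pₙ/qₙ| ≤ (√3/2)ⁿ⁺¹ → 0`. In Lean, `pₙ` and `qₙ` are `p (n + 1)` and `q (n + 1)`.
-/

open Finset

section Recurrence

theorem mem_of_recurrence {R : Type*} [Semiring R] (S : Subsemiring R) {a r : ℕ → R}
    (ha : ∀ n, a n ∈ S) (h0 : r 0 ∈ S) (h1 : r 1 ∈ S)
    (hrec : ∀ n, r (n + 2) = a (n + 1) * r (n + 1) + r n) : ∀ n, r n ∈ S
  | 0 => h0
  | 1 => h1
  | n + 2 => hrec n ▸ S.add_mem (S.mul_mem (ha _) (mem_of_recurrence S ha h0 h1 hrec _))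
      (mem_of_recurrence S ha h0 h1 hrec n)

theorem continuants_det {R : Type*} [CommRing R] {a p q : ℕ → R} (hp0 : p 0 = 1)
    (hprec : ∀ n, p (n + 2) = a (n + 1) * p (n + 1) + p n)
    (hq0 : q 0 = 0) (hq1 : q 1 = 1) (hqrec : ∀ n, q (n + 2) = a (n + 1) * q (n + 1) + q n) :
    ∀ n, p (n + 1) * q n - p n * q (n + 1) = (-1) ^ (n + 1)
  | 0 => by simp [hp0, hq0, hq1]
  | n + 1 => by
    rw [hprec, hqrec, pow_succ]
    linear_combination (-1 : R) * continuants_det hp0 hprec hq0 hq1 hqrec n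

variable {K : Type*} [Field K] {a zs : ℕ → K}

theorem mul_sub_eq_one_of_iterate (hne : ∀ n, zs n ≠ a n)
    (hit : ∀ n, zs (n + 1) = (zs n - a n)⁻¹) (n : ℕ) : zs (n + 1) * (zs n - a n) = 1 := by
  rw [hit]
  exact inv_mul_cancel₀ (sub_ne_zero.2 (hne n))

theorem mul_add_eq_mul_prod_of_recurrence {r : ℕ → K} (hne : ∀ n, zs n ≠ a n)
    (hit : ∀ n, zs (n + 1) = (zs n - a n)⁻¹)
    (hrec : ∀ n, r (n + 2) = a (n + 1) * r (n + 1) + r n) :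
    ∀ n, r (n + 1) * zs (n + 1) + r n = (r 1 * zs 1 + r 0) * ∏ k ∈ range n, zs (k + 2)
  | 0 => by simp
  | n + 1 => by
    rw [prod_range_succ, ← mul_assoc,
      ← mul_add_eq_mul_prod_of_recurrence hne hit hrec n, hrec]
    linear_combination (-r (n + 1)) * mul_sub_eq_one_of_iterate hne hit (n + 1)

theorem sub_convergent_eq_prod {z : K} {p q : ℕ → K} (hz0 : zs 0 = z) (hne : ∀ n, zs n ≠ a n)
    (hit : ∀ n, zs (n + 1) = (zs n - a n)⁻¹)
    (hp0 : p 0 = 1) (hp1 : p 1 = a 0) (hprec : ∀ n, p (n + 2) = a (n + 1) * p (n + 1) + p n)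
    (hq0 : q 0 = 0) (hq1 : q 1 = 1) (hqrec : ∀ n, q (n + 2) = a (n + 1) * q (n + 1) + q n)
    {n : ℕ} (hq : q (n + 1) ≠ 0) :
    z - p (n + 1) / q (n + 1) = (-1) ^ n * (∏ k ∈ range (n + 1), (zs k - a k)) / q (n + 1) := by
  have hinv := mul_sub_eq_one_of_iterate hne hit
  have hqX : q (n + 1) * zs (n + 1) + q n = ∏ k ∈ range (n + 1), zs (k + 1) := by
    rw [mul_add_eq_mul_prod_of_recurrence hne hit hqrec, prod_range_succ', hq0, hq1]
    ring
  have hpX : p (n + 1) * zs (n + 1) + p n = z * (q (n + 1) * zs (n + 1) + q n) := by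
    rw [mul_add_eq_mul_prod_of_recurrence hne hit hprec,
      mul_add_eq_mul_prod_of_recurrence hne hit hqrec, hp0, hp1, hq0, hq1, ← hz0]
    linear_combination -(∏ k ∈ range n, zs (k + 2)) * hinv 0
  have hXP : (q (n + 1) * zs (n + 1) + q n) * ∏ k ∈ range (n + 1), (zs k - a k) = 1 := by
    rw [hqX, ← prod_mul_distrib]
    exact prod_eq_one fun k _ => hinv k
  rw [sub_div' hq, div_left_inj' hq]
  linear_combination -(q (n + 1) * ∏ k ∈ range (n + 1), (zs k - a k)) * hpX
    - (z * q (n + 1) - p (n + 1)) * hXP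
    - (∏ k ∈ range (n + 1), (zs k - a k)) * continuants_det hp0 hprec hq0 hq1 hqrec n

end Recurrence

section Eisenstein

theorem eisOmega_re : eisOmega.re = -1 / 2 := by
  simp [eisOmega]

theorem eisOmega_im : eisOmega.im = √3 / 2 := by
  simp [eisOmega]

theorem eisOmega_sq : eisOmega ^ 2 = -1 - eisOmega := by
  have h3 : (√3 : ℂ) ^ 2 = 3 := by norm_cast; simp
  simp only [eisOmega]
  linear_combination (I ^ 2 / 4) * h3 + (3 / 4) * I_sq

theorem normSq_add_mul_eisOmega (x y : ℝ) :
    normSq (x + y * eisOmega) = x ^ 2 - x * y + y ^ 2 := by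
  have h3 : √3 ^ 2 = 3 := Real.sq_sqrt (by norm_num)
  simp only [normSq_apply, add_re, add_im, mul_re, mul_im, ofReal_re, ofReal_im,
    eisOmega_re, eisOmega_im]
  linear_combination (y ^ 2 / 4) * h3

def eisensteinIntegers : Subring ℂ where
  carrier := {a | IsEis a}
  zero_mem' := ⟨0, 0, by simp⟩
  one_mem' := ⟨1, 0, by simp⟩
  add_mem' := by
    rintro _ _ ⟨x, y, rfl⟩ ⟨u, v, rfl⟩
    exact ⟨x + u, y + v, by push_cast; ring⟩
  neg_mem' := by
    rintro _ ⟨x, y, rfl⟩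
    exact ⟨-x, -y, by push_cast; ring⟩
  mul_mem' := by
    rintro _ _ ⟨x, y, rfl⟩ ⟨u, v, rfl⟩
    refine ⟨x * u - y * v, x * v + y * u - y * v, ?_⟩
    push_cast
    linear_combination ((y : ℂ) * v) * eisOmega_sq

theorem IsEis.one_le_norm {a : ℂ} (ha : IsEis a) (h0 : a ≠ 0) : 1 ≤ ‖a‖ := by
  obtain ⟨x, y, rfl⟩ := ha
  have hxy : x ≠ 0 ∨ y ≠ 0 := by
    by_contra! h
    simp [h.1, h.2] at h0
  have hform : (1 : ℤ) ≤ x ^ 2 - x * y + y ^ 2 := by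
    rcases hxy with hx | hy
    · nlinarith [sq_nonneg (x - 2 * y), sq_pos_of_ne_zero hx]
    · nlinarith [sq_nonneg (2 * x - y), sq_pos_of_ne_zero hy]
  have hnormSq := normSq_add_mul_eisOmega x y
  push_cast at hnormSq
  rw [norm_def, Real.one_le_sqrt, hnormSq]
  exact_mod_cast hform

theorem exists_isEis_norm_sub_le (w : ℂ) : ∃ b, IsEis b ∧ ‖w - b‖ ≤ √3 / 2 := by
  set t : ℝ := 2 * w.im / √3
  set s : ℝ := w.re + t / 2
  have hw : w = s + t * eisOmega := by
    apply Complex.ext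
    · simp [eisOmega_re, s]; ring
    · simp [eisOmega_im, t]; field_simp
  refine ⟨round s + round t * eisOmega, ⟨round s, round t, rfl⟩, ?_⟩
  have hdiff : w - (round s + round t * eisOmega) =
      ((s - round s : ℝ) : ℂ) + ((t - round t : ℝ) : ℂ) * eisOmega := by
    rw [hw]; push_cast; ring
  obtain ⟨hδ₁, hδ₂⟩ := abs_le.1 (abs_sub_round s)
  obtain ⟨hε₁, hε₂⟩ := abs_le.1 (abs_sub_round t)
  rw [← pow_le_pow_iff_left₀ (norm_nonneg _) (by positivity) two_ne_zero, ← normSq_eq_norm_sq,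
    hdiff, normSq_add_mul_eisOmega, div_pow, Real.sq_sqrt (by norm_num)]
  nlinarith [mul_nonneg (sub_nonneg.2 hδ₂) (sub_nonneg.2 hε₁),
    mul_nonneg (sub_nonneg.2 hδ₁) (sub_nonneg.2 hε₂)]

end Eisenstein

/-- The convergents pₙ/qₙ converge to z.  (Here `p (n+1)`, `q (n+1)` denote pₙ, qₙ.) -/
theorem eisenstein_cf_convergents_tendsto
    (z : ℂ) (a zs : ℕ → ℂ)
    (ha : ∀ n, IsEis (a n))
    (hz0 : zs 0 = z)
    (hnear : ∀ n, ∀ b : ℂ, IsEis b → ‖zs n - a n‖ ≤ ‖zs n - b‖)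
    (hne : ∀ n, zs n ≠ a n)
    (hit : ∀ n, zs (n + 1) = (zs n - a n)⁻¹)
    (p q : ℕ → ℂ)
    (hp0 : p 0 = 1) (hp1 : p 1 = a 0)
    (hprec : ∀ n, p (n + 2) = a (n + 1) * p (n + 1) + p n)
    (hq0 : q 0 = 0) (hq1 : q 1 = 1)
    (hqrec : ∀ n, q (n + 2) = a (n + 1) * q (n + 1) + q n)
    (hqne : ∀ n, q (n + 1) ≠ 0)
    :
    Filter.Tendsto (fun n : ℕ => p (n + 1) / q (n + 1)) Filter.atTop (nhds z) := by
  have hdist (n : ℕ) : ‖zs n - a n‖ ≤ √3 / 2 := by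
    obtain ⟨b, hb, hwb⟩ := exists_isEis_norm_sub_le (zs n)
    exact (hnear n b hb).trans hwb
  have hq (n : ℕ) : 1 ≤ ‖q (n + 1)‖ :=
    IsEis.one_le_norm (mem_of_recurrence eisensteinIntegers.toSubsemiring ha
      (hq0 ▸ zero_mem _) (hq1 ▸ one_mem _) hqrec (n + 1)) (hqne n)
  have herr (n : ℕ) : ‖p (n + 1) / q (n + 1) - z‖ ≤ (√3 / 2) ^ (n + 1) := by
    rw [norm_sub_rev, sub_convergent_eq_prod hz0 hne hit hp0 hp1 hprec hq0 hq1 hqrec (hqne n),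
      norm_div, norm_mul, norm_pow, norm_neg, norm_one, one_pow, one_mul, norm_prod]
    calc (∏ k ∈ range (n + 1), ‖zs k - a k‖) / ‖q (n + 1)‖
        ≤ ∏ k ∈ range (n + 1), ‖zs k - a k‖ := div_le_self (by positivity) (hq n)
      _ ≤ ∏ _k ∈ range (n + 1), √3 / 2 :=
          prod_le_prod (fun _ _ => norm_nonneg _) (fun k _ => hdist k)
      _ = (√3 / 2) ^ (n + 1) := by rw [prod_const, card_range]
  have hlt : √3 / 2 < 1 := by
    rw [div_lt_one two_pos, Real.sqrt_lt' two_pos]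
    norm_num
  exact tendsto_iff_norm_sub_tendsto_zero.2 (squeeze_zero (fun _ => norm_nonneg _) herr
    ((tendsto_pow_atTop_nhds_zero_of_lt_one (by positivity) hlt).comp
      (Filter.tendsto_add_atTop_nat 1)))
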